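/- arXiv:1005.0118 — 5 statements merged into one kernel-verified Lean document; each statement's English description precedes it below -/
import Mathlib

section
/- The ordering on Ω-words defined by comparing weight tuples wt(u) = (|u|_Ω + |u|_X, |u|_X, δ, u_1, ..., u_n) lexicographically (with wt(x) = (1, x) for variables x) is a well-ordering on the set of Ω-words over a well-ordered set X of variables and a well-ordered set Ω of operations. -/
/- Ω-words over a set X of variables and a set Op of operation symbols with
   arities given by `ar : Op → ℕ`. -/
inductive OW (X Op : Type) (ar : Op → ℕ) : Type
  | var : X → OW X Op ar
  | node : (f : Op) → (Fin (ar f) → OW X Op ar) → OW X Op ar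

namespace OW

variable {X Op : Type} {ar : Op → ℕ}

/-- number of occurrences of variables, |u|_X -/
def sizeX : OW X Op ar → ℕ
  | var _ => 1
  | node _ ts => ∑ i, sizeX (ts i)

/-- number of occurrences of operation symbols, |u|_Ω -/
def sizeOp : OW X Op ar → ℕ
  | var _ => 0
  | node _ ts => 1 + ∑ i, sizeOp (ts i)

/-- The ordering comparing wt(u) = (|u|_Ω + |u|_X, |u|_X, δ, u_1, ..., u_n)
    lexicographically, with wt(x) = (1, x) for variables. -/
inductive OLt [LinearOrder X] [LinearOrder Op] : OW X Op ar → OW X Op ar → Prop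
  | size {u v : OW X Op ar} :
      sizeOp u + sizeX u < sizeOp v + sizeX v → OLt u v
  | var {x y : X} : x < y → OLt (var x) (var y)
  | szX {f g : Op} {ts : Fin (ar f) → OW X Op ar} {ss : Fin (ar g) → OW X Op ar} :
      sizeOp (node f ts) + sizeX (node f ts) = sizeOp (node g ss) + sizeX (node g ss) →
      sizeX (node f ts) < sizeX (node g ss) → OLt (node f ts) (node g ss)
  | opsym {f g : Op} {ts : Fin (ar f) → OW X Op ar} {ss : Fin (ar g) → OW X Op ar} :
      sizeOp (node f ts) + sizeX (node f ts) = sizeOp (node g ss) + sizeX (node g ss) →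
      sizeX (node f ts) = sizeX (node g ss) →
      f < g → OLt (node f ts) (node g ss)
  | args {f : Op} {ts ss : Fin (ar f) → OW X Op ar} :
      sizeOp (node f ts) + sizeX (node f ts) = sizeOp (node f ss) + sizeX (node f ss) →
      sizeX (node f ts) = sizeX (node f ss) →
      (i : Fin (ar f)) → (∀ j, j < i → ts j = ss j) → OLt (ts i) (ss i) →
      OLt (node f ts) (node f ss)

end OW

namespace OW

variable {X Op : Type} {ar : Op → ℕ}

/-- total size |u|_Ω + |u|_X -/
def sz (u : OW X Op ar) : ℕ := sizeOp u + sizeX u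

theorem one_le_sizeX (har : ∀ f, 1 ≤ ar f) : ∀ u : OW X Op ar, 1 ≤ sizeX u
  | var _ => le_refl 1
  | node f ts => by
    have hi := one_le_sizeX har (ts ⟨0, har f⟩)
    have h2 := Finset.single_le_sum (f := fun j => sizeX (ts j))
      (fun j _ => Nat.zero_le _) (Finset.mem_univ (⟨0, har f⟩ : Fin (ar f)))
    simp only [sizeX]; omega

theorem sz_child (f : Op) (ts : Fin (ar f) → OW X Op ar) (i : Fin (ar f)) :
    sz (ts i) < sz (node f ts) := by
  have h1 := Finset.single_le_sum (f := fun j => sizeOp (ts j))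
    (fun j _ => Nat.zero_le _) (Finset.mem_univ i)
  have h2 := Finset.single_le_sum (f := fun j => sizeX (ts j))
    (fun j _ => Nat.zero_le _) (Finset.mem_univ i)
  simp only [sz, sizeOp, sizeX]; omega

theorem two_le_sz_node (har : ∀ f, 1 ≤ ar f) (f : Op) (ts : Fin (ar f) → OW X Op ar) :
    2 ≤ sz (node f ts) := by
  have h := sz_child f ts ⟨0, har f⟩
  have h2 := one_le_sizeX har (ts ⟨0, har f⟩)
  simp only [sz] at *
  omega

variable [LinearOrder X] [LinearOrder Op]

theorem sz_le_of_olt {u v : OW X Op ar} (h : OLt u v) : sz u ≤ sz v := by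
  cases h with
  | size h => exact le_of_lt h
  | var _ => exact le_refl _
  | szX h _ => exact le_of_eq h
  | opsym h _ _ => exact le_of_eq h
  | args h _ _ _ _ => exact le_of_eq h

theorem olt_trans : ∀ u v w : OW X Op ar, OLt u v → OLt v w → OLt u w := by
  intro u
  induction u with
  | var x =>
    intro v w h1 h2
    rcases Nat.lt_or_ge (sz (var x : OW X Op ar)) (sz w) with hlt | hge
    · exact OLt.size hlt
    have e1 := sz_le_of_olt h1
    have e2 := sz_le_of_olt h2
    cases h1 with
    | size h => exact absurd h (by simp only [sz] at *; omega)
    | var hxy =>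
      cases h2 with
      | size h => exact absurd h (by simp only [sz] at *; omega)
      | var hyz => exact OLt.var (lt_trans hxy hyz)
  | node f ts ih =>
    intro v w h1 h2
    rcases Nat.lt_or_ge (sz (node f ts)) (sz w) with hlt | hge
    · exact OLt.size hlt
    have e1 := sz_le_of_olt h1
    have e2 := sz_le_of_olt h2
    cases h1 with
    | size h => exact absurd h (by simp only [sz] at *; omega)
    | szX hs1 hx1 =>
      cases h2 with
      | size h => exact absurd h (by simp only [sz] at *; omega)
      | szX hs2 hx2 => exact OLt.szX (hs1.trans hs2) (lt_trans hx1 hx2)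
      | opsym hs2 hx2 hf => exact OLt.szX (hs1.trans hs2) (hx2 ▸ hx1)
      | args hs2 hx2 i hp hl => exact OLt.szX (hs1.trans hs2) (hx2 ▸ hx1)
    | opsym hs1 hx1 hf1 =>
      cases h2 with
      | size h => exact absurd h (by simp only [sz] at *; omega)
      | szX hs2 hx2 => exact OLt.szX (hs1.trans hs2) (hx1 ▸ hx2)
      | opsym hs2 hx2 hf2 => exact OLt.opsym (hs1.trans hs2) (hx1.trans hx2) (lt_trans hf1 hf2)
      | args hs2 hx2 i hp hl => exact OLt.opsym (hs1.trans hs2) (hx1.trans hx2) hf1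
    | args hs1 hx1 i hp1 hl1 =>
      cases h2 with
      | size h => exact absurd h (by simp only [sz] at *; omega)
      | szX hs2 hx2 => exact OLt.szX (hs1.trans hs2) (hx1 ▸ hx2)
      | opsym hs2 hx2 hf2 => exact OLt.opsym (hs1.trans hs2) (hx1.trans hx2) hf2
      | args hs2 hx2 i' hp2 hl2 =>
        rcases lt_trichotomy i i' with hii | hii | hii
        · refine OLt.args (hs1.trans hs2) (hx1.trans hx2) i
            (fun j hj => (hp1 j hj).trans (hp2 j (lt_trans hj hii))) ?_
          rw [hp2 i hii] at hl1
          exact hl1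
        · subst hii
          exact OLt.args (hs1.trans hs2) (hx1.trans hx2) i
            (fun j hj => (hp1 j hj).trans (hp2 j hj)) (ih i _ _ hl1 hl2)
        · refine OLt.args (hs1.trans hs2) (hx1.trans hx2) i'
            (fun j hj => (hp1 j (lt_trans hj hii)).trans (hp2 j hj)) ?_
          rw [hp1 i' hii]
          exact hl2

theorem olt_trichot (har : ∀ f, 1 ≤ ar f) :
    ∀ u v : OW X Op ar, OLt u v ∨ u = v ∨ OLt v u := by
  intro u
  induction u with
  | var x =>
    intro v
    cases v with
    | var y =>
      rcases lt_trichotomy x y with h | h | h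
      · exact Or.inl (OLt.var h)
      · exact Or.inr (Or.inl (by rw [h]))
      · exact Or.inr (Or.inr (OLt.var h))
    | node g ss =>
      left
      apply OLt.size
      have := two_le_sz_node har g ss
      simp only [sz, sizeOp, sizeX] at *
      omega
  | node f ts ih =>
    intro v
    cases v with
    | var y =>
      right; right
      apply OLt.size
      have := two_le_sz_node har f ts
      simp only [sz, sizeOp, sizeX] at *
      omega
    | node g ss =>
      rcases lt_trichotomy (sz (node f ts)) (sz (node g ss)) with h | hsz | h
      · exact Or.inl (OLt.size h)
      · rcases lt_trichotomy (sizeX (node f ts)) (sizeX (node g ss)) with h | hx | h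
        · exact Or.inl (OLt.szX hsz h)
        · rcases lt_trichotomy f g with h | hfg | h
          · exact Or.inl (OLt.opsym hsz hx h)
          · subst hfg
            by_cases heq : ts = ss
            · exact Or.inr (Or.inl (by rw [heq]))
            · classical
              have hne : {i : Fin (ar f) | ts i ≠ ss i}.Nonempty := by
                by_contra hcon
                apply heq
                funext i
                by_contra hti
                exact hcon ⟨i, hti⟩
              obtain ⟨i, hi, hmin⟩ :=
                (wellFounded_lt (α := Fin (ar f))).has_min _ hne
              have hpre : ∀ j, j < i → ts j = ss j := fun j hj => by
                by_contra hjne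
                exact hmin j hjne hj
              rcases ih i (ss i) with h | h | h
              · exact Or.inl (OLt.args hsz hx i hpre h)
              · exact absurd h hi
              · exact Or.inr (Or.inr (OLt.args hsz.symm hx.symm i
                  (fun j hj => (hpre j hj).symm) h))
          · exact Or.inr (Or.inr (OLt.opsym hsz.symm hx.symm h))
        · exact Or.inr (Or.inr (OLt.szX hsz.symm h))
      · exact Or.inr (Or.inr (OLt.size h))

theorem acc_var [WellFoundedLT X] (har : ∀ f, 1 ≤ ar f) :
    ∀ x : X, Acc OLt (var x : OW X Op ar) := by
  intro x
  induction x using (wellFounded_lt (α := X)).induction with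
  | _ x ih =>
    constructor
    intro v hv
    cases hv with
    | size h =>
      have := one_le_sizeX har v
      exact absurd h (by simp only [sizeOp, sizeX] at *; omega)
    | var h => exact ih _ h

private def NSub (X Op : Type) (ar : Op → ℕ) (n : ℕ) : Type := {v : OW X Op ar // sz v < n}

private def nrel (X Op : Type) (ar : Op → ℕ) [LinearOrder X] [LinearOrder Op] (n : ℕ) :
    NSub X Op ar n → NSub X Op ar n → Prop :=
  fun a b => OLt a.1 b.1

private def NT (X Op : Type) (ar : Op → ℕ) (n : ℕ) : Type :=
  {p : Σ' g : Op, Fin (ar g) → OW X Op ar // sz (node p.1 p.2) = n}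

private def MT (X Op : Type) (ar : Op → ℕ) (n : ℕ) : Type :=
  ℕ × Σ' g : Op, (Fin (ar g) → NSub X Op ar n)

private def mrel (X Op : Type) (ar : Op → ℕ) [LinearOrder X] [LinearOrder Op] (n : ℕ) :
    MT X Op ar n → MT X Op ar n → Prop :=
  Prod.Lex (· < ·) (PSigma.Lex (· < ·) (fun g => Pi.Lex (· < ·) (fun {_} a b => nrel X Op ar n a b)))

private def meas (X Op : Type) (ar : Op → ℕ) (n : ℕ) (p : NT X Op ar n) : MT X Op ar n :=
  (sizeX (node p.1.1 p.1.2),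
    ⟨p.1.1, fun i => ⟨p.1.2 i, by
      have h1 := sz_child p.1.1 p.1.2 i
      have h2 := p.2
      omega⟩⟩)

theorem acc_node [WellFoundedLT X] [WellFoundedLT Op] (n : ℕ)
    (H : ∀ v : OW X Op ar, sz v < n → Acc OLt v) :
    ∀ (f : Op) (ts : Fin (ar f) → OW X Op ar), sz (node f ts) = n → Acc OLt (node f ts) := by
  have wfS : WellFounded (nrel X Op ar n) :=
    ⟨fun a => InvImage.accessible _ (H a.1 a.2)⟩
  have wfT : WellFounded (mrel X Op ar n) := by
    refine (wellFounded_lt (α := ℕ)).prod_lex ?_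
    refine (wellFounded_lt (α := Op)).psigma_lex ?_
    intro g
    exact Pi.Lex.wellFounded (· < ·) (fun _ => wfS)
  have wfm : WellFounded (InvImage (mrel X Op ar n) (meas X Op ar n)) :=
    InvImage.wf _ wfT
  have key : ∀ p : NT X Op ar n, Acc OLt (node p.1.1 p.1.2) := by
    intro p
    induction p using wfm.induction with
    | _ p IH =>
      have hn : sz (node p.1.1 p.1.2) = n := p.2
      constructor
      intro v hv
      cases hv with
      | size h => exact H v (by simp only [sz] at hn ⊢; omega)
      | szX hs hx =>
        rename_i g ss
        have hn' : sz (node g ss) = n := by simp only [sz] at hn ⊢; omega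
        exact IH ⟨⟨g, ss⟩, hn'⟩ (Prod.Lex.left _ _ hx)
      | opsym hs hx hfg =>
        rename_i g ss
        have hn' : sz (node g ss) = n := by simp only [sz] at hn ⊢; omega
        refine IH ⟨⟨g, ss⟩, hn'⟩ (Prod.lex_def.mpr (Or.inr ⟨hx, ?_⟩))
        exact PSigma.Lex.left _ _ hfg
      | args hs hx i hp hl =>
        rename_i ss
        have hn' : sz (node p.1.1 ss) = n := by simp only [sz] at hn ⊢; omega
        refine IH ⟨⟨p.1.1, ss⟩, hn'⟩ (Prod.lex_def.mpr (Or.inr ⟨hx, ?_⟩))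
        exact PSigma.Lex.right _ ⟨i, fun j hj => Subtype.ext (hp j hj), hl⟩
  intro f ts hn
  exact key ⟨⟨f, ts⟩, hn⟩

theorem olt_wf [WellFoundedLT X] [WellFoundedLT Op] (har : ∀ f, 1 ≤ ar f) :
    WellFounded (OLt : OW X Op ar → OW X Op ar → Prop) := by
  have key : ∀ n, ∀ u : OW X Op ar, sz u ≤ n → Acc OLt u := by
    intro n
    induction n with
    | zero =>
      intro u hu
      have := one_le_sizeX har u
      exact absurd hu (by simp only [sz] at *; omega)
    | succ n ih =>
      intro u hu
      rcases eq_or_lt_of_le hu with h | h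
      · cases u with
        | var x => exact acc_var har x
        | node f ts =>
          exact acc_node (n + 1) (fun v hv => ih v (Nat.lt_succ_iff.mp hv)) f ts h
      · exact ih u (Nat.lt_succ_iff.mp h)
  exact ⟨fun u => key (sz u) u le_rfl⟩

end OW

/-- the weight-lexicographic ordering on Ω-words over a well-ordered
set X of variables and a well-ordered set of operations (all of arity ≥ 1) is a
well-ordering. -/
theorem weight_lex_isWellOrder (X Op : Type) [LinearOrder X] [WellFoundedLT X]
    [LinearOrder Op] [WellFoundedLT Op] (ar : Op → ℕ) (har : ∀ f, 1 ≤ ar f) :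
    IsWellOrder (OW X Op ar) OW.OLt := by
  exact
    { trichotomous := fun a b h1 h2 => ((OW.olt_trichot har a b).resolve_left h1).resolve_right h2
      wf := OW.olt_wf har }
end

section
/- The ordering on Ω-words comparing wt(u) = (|u|_Ω + |u|_X, |u|_X, δ, u_1, ..., u_n) lexicographically is monomial: for every ⋆-Ω-word w and Ω-words u > v, one has w|_u > w|_v, where w|_u denotes the result of substituting u for the symbol ⋆ in w. -/
/-- A ⋆-Ω-word: a term over X ∪ {⋆} with exactly one occurrence of ⋆. -/
inductive OCtx (X Op : Type) (ar : Op → ℕ) : Type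
  | hole : OCtx X Op ar
  | node : (f : Op) → (i : Fin (ar f)) → OCtx X Op ar →
      (Fin (ar f) → OW X Op ar) → OCtx X Op ar

/-- Substitution of an Ω-word for ⋆ in a ⋆-Ω-word: w|_u. -/
def OCtx.subst {X Op : Type} {ar : Op → ℕ} : OCtx X Op ar → OW X Op ar → OW X Op ar
  | .hole, u => u
  | .node f i c ts, u => OW.node f (Function.update ts i (c.subst u))


namespace OW
variable {X Op : Type} {ar : Op → ℕ}

lemma olt_total_le [LinearOrder X] [LinearOrder Op] {v u : OW X Op ar}
    (h : OLt v u) : sizeOp v + sizeX v ≤ sizeOp u + sizeX u := by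
  cases h with
  | size h => exact h.le
  | var h => simp [sizeOp, sizeX]
  | szX h1 h2 => exact h1.le
  | opsym h1 h2 h3 => exact h1.le
  | args h1 h2 i hj hi => exact h1.le

lemma olt_sizeX_le_of_eq [LinearOrder X] [LinearOrder Op] {v u : OW X Op ar}
    (h : OLt v u) (he : sizeOp v + sizeX v = sizeOp u + sizeX u) :
    sizeX v ≤ sizeX u := by
  cases h with
  | size h => omega
  | var h => simp [sizeX]
  | szX h1 h2 => exact h2.le
  | opsym h1 h2 h3 => exact h2.le
  | args h1 h2 i hj hi => exact h2.le

lemma sizeX_node_update {f : Op} (ts : Fin (ar f) → OW X Op ar) (i : Fin (ar f))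
    (a : OW X Op ar) :
    sizeX (node f (Function.update ts i a)) =
      sizeX a + ∑ j ∈ Finset.univ \ {i}, sizeX (ts j) := by
  have key : (fun j => sizeX (Function.update ts i a j)) =
      Function.update (fun j => sizeX (ts j)) i (sizeX a) := by
    funext j
    by_cases hji : j = i
    · subst hji; simp
    · simp [Function.update_of_ne hji]
  show (∑ j, sizeX (Function.update ts i a j)) = _
  calc (∑ j, sizeX (Function.update ts i a j))
      = ∑ j, Function.update (fun j => sizeX (ts j)) i (sizeX a) j := by rw [key]
    _ = _ := Finset.sum_update_of_mem (Finset.mem_univ i) _ _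

lemma sizeOp_node_update {f : Op} (ts : Fin (ar f) → OW X Op ar) (i : Fin (ar f))
    (a : OW X Op ar) :
    sizeOp (node f (Function.update ts i a)) =
      1 + (sizeOp a + ∑ j ∈ Finset.univ \ {i}, sizeOp (ts j)) := by
  have key : (fun j => sizeOp (Function.update ts i a j)) =
      Function.update (fun j => sizeOp (ts j)) i (sizeOp a) := by
    funext j
    by_cases hji : j = i
    · subst hji; simp
    · simp [Function.update_of_ne hji]
  show 1 + (∑ j, sizeOp (Function.update ts i a j)) = _
  congr 1
  calc (∑ j, sizeOp (Function.update ts i a j))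
      = ∑ j, Function.update (fun j => sizeOp (ts j)) i (sizeOp a) j := by rw [key]
    _ = _ := Finset.sum_update_of_mem (Finset.mem_univ i) _ _

end OW

/-- the weight-lexicographic ordering is monomial: u > v implies
w|_u > w|_v for every ⋆-Ω-word w. -/
theorem weight_lex_monomial (X Op : Type) [LinearOrder X] [WellFoundedLT X]
    [LinearOrder Op] [WellFoundedLT Op] (ar : Op → ℕ) (har : ∀ f, 1 ≤ ar f)
    (w : OCtx X Op ar) (u v : OW X Op ar) (h : OW.OLt v u) :
    OW.OLt (w.subst v) (w.subst u) := by
  induction w with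
  | hole => exact h
  | node f i c ts ih =>
    simp only [OCtx.subst]
    set sv := c.subst v with hsv
    set su := c.subst u with hsu
    have hle : OW.sizeOp sv + OW.sizeX sv ≤ OW.sizeOp su + OW.sizeX su :=
      OW.olt_total_le ih
    have hXv := OW.sizeX_node_update ts i sv
    have hXu := OW.sizeX_node_update ts i su
    have hOv := OW.sizeOp_node_update ts i sv
    have hOu := OW.sizeOp_node_update ts i su
    rcases lt_or_eq_of_le hle with hlt | heq
    · exact OW.OLt.size (by omega)
    · have hX : OW.sizeX sv ≤ OW.sizeX su := OW.olt_sizeX_le_of_eq ih heq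
      rcases lt_or_eq_of_le hX with hXlt | hXeq
      · exact OW.OLt.szX (by omega) (by omega)
      · refine OW.OLt.args (by omega) (by omega) i (fun j hj => ?_) ?_
        · have : j ≠ i := ne_of_lt hj
          simp [Function.update_of_ne this]
        · simpa using ih
end

section
/- Let S be a set of monic Ω-polynomials in the free Ω-algebra k(X,Ω) with a monomial well-ordering on Ω-words. If S is a Gröbner–Shirshov basis (every inclusion composition of elements of S is trivial modulo S), then for every nonzero f in the Ω-ideal Id(S) generated by S, the leading Ω-word of f has the form u|_{s̄} for some s ∈ S and some ⋆-Ω-word u, i.e., the leading word of f contains the leading word of some element of S as a subword. -/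
section GSB

variable {X Op : Type} {ar : Op → ℕ} {k : Type} [Field k]

/-- Ω-polynomials: the free Ω-algebra k(X,Ω) as the k-space with basis the Ω-words. -/
abbrev OPoly (X Op : Type) (ar : Op → ℕ) (k : Type) [Field k] := OW X Op ar →₀ k

/-- The s-Ω-word u|_s, extended linearly in s. -/
noncomputable def applyC (c : OCtx X Op ar) (f : OPoly X Op ar k) : OPoly X Op ar k :=
  Finsupp.mapDomain c.subst f

variable [LinearOrder (OW X Op ar)]

/-- `IsLw f w`: w is the leading Ω-word of f. -/
def IsLw (f : OPoly X Op ar k) (w : OW X Op ar) : Prop :=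
  w ∈ f.support ∧ ∀ v ∈ f.support, v ≤ w

/-- f is monic: its leading coefficient is 1. -/
def Monic (f : OPoly X Op ar k) : Prop := ∃ w, IsLw f w ∧ f w = 1

/-- The Ω-ideal of k(X,Ω) generated by S. -/
noncomputable def IdS (S : Set (OPoly X Op ar k)) : Submodule k (OPoly X Op ar k) :=
  Submodule.span k {g | ∃ (c : OCtx X Op ar) (s : OPoly X Op ar k), s ∈ S ∧ g = applyC c s}

/-- h is trivial modulo (S, w): h = Σ αᵢ uᵢ|_{sᵢ} with sᵢ ∈ S and uᵢ|_{s̄ᵢ} < w. -/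
def TrivMod (S : Set (OPoly X Op ar k)) (w : OW X Op ar) (h : OPoly X Op ar k) : Prop :=
  ∃ (n : ℕ) (α : Fin n → k) (c : Fin n → OCtx X Op ar) (s : Fin n → OPoly X Op ar k),
    (∀ i, s i ∈ S) ∧ h = ∑ i, α i • applyC (c i) (s i) ∧
    ∀ i ws, IsLw (s i) ws → (c i).subst ws < w

/-- S is a Gröbner–Shirshov basis: every inclusion composition
(f,g)_w = f − u|_g, with w = f̄ = u|_{ḡ}, is trivial modulo (S, w). -/
def IsGSB (S : Set (OPoly X Op ar k)) : Prop :=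
  ∀ f ∈ S, ∀ g ∈ S, ∀ (c : OCtx X Op ar) (wf wg : OW X Op ar),
    IsLw f wf → IsLw g wg → wf = c.subst wg → TrivMod S wf (f - applyC c g)

end GSB
section Aux

variable {X Op : Type} {ar : Op → ℕ}

/-- composition of contexts -/
def OCtx.comp : OCtx X Op ar → OCtx X Op ar → OCtx X Op ar
  | .hole, d => d
  | .node f i c ts, d => .node f i (c.comp d) ts

theorem OCtx.subst_comp (c d : OCtx X Op ar) (u : OW X Op ar) :
    (c.comp d).subst u = c.subst (d.subst u) := by
  induction c with
  | hole => rfl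
  | node f i c ts ih => simp [OCtx.comp, OCtx.subst, ih]

/-- two-hole contexts -/
inductive OCtx2 (X Op : Type) (ar : Op → ℕ) : Type
  | split : (f : Op) → (i j : Fin (ar f)) → i ≠ j → OCtx X Op ar → OCtx X Op ar →
      (Fin (ar f) → OW X Op ar) → OCtx2 X Op ar
  | node : (f : Op) → (i : Fin (ar f)) → OCtx2 X Op ar → (Fin (ar f) → OW X Op ar) →
      OCtx2 X Op ar

def OCtx2.subst2 : OCtx2 X Op ar → OW X Op ar → OW X Op ar → OW X Op ar
  | .split f i j _ cd ce ts, u, v =>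
      .node f (Function.update (Function.update ts i (cd.subst u)) j (ce.subst v))
  | .node f i E ts, u, v => .node f (Function.update ts i (E.subst2 u v))

def OCtx2.fix1 : OCtx2 X Op ar → OW X Op ar → OCtx X Op ar
  | .split f i j _ cd ce ts, u => .node f j ce (Function.update ts i (cd.subst u))
  | .node f i E ts, u => .node f i (E.fix1 u) ts

def OCtx2.fix2 : OCtx2 X Op ar → OW X Op ar → OCtx X Op ar
  | .split f i j _ cd ce ts, v => .node f i cd (Function.update ts j (ce.subst v))
  | .node f i E ts, v => .node f i (E.fix2 v) ts

theorem OCtx2.fix1_subst (E : OCtx2 X Op ar) (u v : OW X Op ar) :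
    (E.fix1 u).subst v = E.subst2 u v := by
  induction E with
  | split f i j hij cd ce ts => simp [fix1, subst2, OCtx.subst]
  | node f i E ts ih => simp [fix1, subst2, OCtx.subst, ih]

theorem OCtx2.fix2_subst (E : OCtx2 X Op ar) (u v : OW X Op ar) :
    (E.fix2 v).subst u = E.subst2 u v := by
  induction E with
  | split f i j hij cd ce ts =>
      simp [fix2, subst2, OCtx.subst, Function.update_comm hij]
  | node f i E ts ih => simp [fix2, subst2, OCtx.subst, ih]

theorem trichotomy (C : OCtx X Op ar) : ∀ (D : OCtx X Op ar) (u v : OW X Op ar),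
    C.subst u = D.subst v →
    (∃ E : OCtx X Op ar, (∀ x, C.subst x = D.subst (E.subst x)) ∧ v = E.subst u) ∨
    (∃ E : OCtx X Op ar, (∀ y, D.subst y = C.subst (E.subst y)) ∧ u = E.subst v) ∨
    (∃ E : OCtx2 X Op ar, (∀ x, C.subst x = E.subst2 x v) ∧
      (∀ y, D.subst y = E.subst2 u y)) := by
  induction C with
  | hole =>
      intro D u v h
      exact Or.inr (Or.inl ⟨D, fun y => rfl, h⟩)
  | node f i c ts ih =>
      intro D u v h
      cases D with
      | hole => exact Or.inl ⟨.node f i c ts, fun x => rfl, h.symm⟩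
      | node g j d ss =>
          simp only [OCtx.subst] at h
          injection h with hf hts
          subst hf
          have hts' : Function.update ts i (c.subst u) = Function.update ss j (d.subst v) :=
            eq_of_heq hts
          by_cases hij : i = j
          · subst hij
            have hcd : c.subst u = d.subst v := by
              have := congrFun hts' i
              simpa using this
            have hne : ∀ m, m ≠ i → ts m = ss m := by
              intro m hm
              have := congrFun hts' m
              simpa [Function.update_of_ne hm] using this
            have hupd : ∀ z, Function.update ts i z = Function.update ss i z := by
              intro z
              funext m
              by_cases hm : m = i
              · subst hm; simp
              · simp [Function.update_of_ne hm, hne m hm]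
            rcases ih d u v hcd with ⟨E, hE, hv⟩ | ⟨E, hE, hu⟩ | ⟨E, hE1, hE2⟩
            · refine Or.inl ⟨E, fun x => ?_, hv⟩
              simp only [OCtx.subst]
              rw [← hE x, hupd]
            · refine Or.inr (Or.inl ⟨E, fun y => ?_, hu⟩)
              simp only [OCtx.subst]
              rw [← hE y, hupd]
            · refine Or.inr (Or.inr ⟨.node f i E ts, fun x => ?_, fun y => ?_⟩)
              · simp only [OCtx.subst, OCtx2.subst2]
                rw [hE1 x]
              · simp only [OCtx.subst, OCtx2.subst2]
                rw [hE2 y, hupd]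
          · -- disjoint holes
            have htj : ts j = d.subst v := by
              have := congrFun hts' j
              simpa [Function.update_of_ne (Ne.symm hij)] using this
            have hsi : ss i = c.subst u := by
              have := congrFun hts' i
              simpa [Function.update_of_ne hij] using this.symm
            have hms : ∀ m, m ≠ i → m ≠ j → ts m = ss m := by
              intro m hmi hmj
              have := congrFun hts' m
              simpa [Function.update_of_ne hmi, Function.update_of_ne hmj] using this
            refine Or.inr (Or.inr ⟨.split f i j hij c d ts, fun x => ?_, fun y => ?_⟩)
            · simp only [OCtx.subst, OCtx2.subst2]
              congr 1
              rw [← htj]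
              funext m
              by_cases hm : m = j
              · subst hm; simp [Function.update_of_ne (Ne.symm hij)]
              · rw [Function.update_of_ne hm]
            · simp only [OCtx.subst, OCtx2.subst2]
              congr 1
              funext m
              by_cases hm : m = j
              · subst hm; simp
              · rw [Function.update_of_ne hm, Function.update_of_ne hm]
                by_cases hmi : m = i
                · subst hmi; simpa using hsi
                · simp [Function.update_of_ne hmi, hms m hmi hm]

end Aux
section Aux2

variable {X Op : Type} {ar : Op → ℕ} {k : Type} [Field k]

theorem applyC_add (c : OCtx X Op ar) (p q : OPoly X Op ar k) :
    applyC c (p + q) = applyC c p + applyC c q := Finsupp.mapDomain_add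

theorem applyC_sub (c : OCtx X Op ar) (p q : OPoly X Op ar k) :
    applyC c (p - q) = applyC c p - applyC c q :=
  map_sub (Finsupp.mapDomain.addMonoidHom c.subst) p q

theorem applyC_smul (c : OCtx X Op ar) (a : k) (p : OPoly X Op ar k) :
    applyC c (a • p) = a • applyC c p := Finsupp.mapDomain_smul a p

theorem applyC_single (c : OCtx X Op ar) (u : OW X Op ar) (a : k) :
    applyC c (Finsupp.single u a) = Finsupp.single (c.subst u) a :=
  Finsupp.mapDomain_single

theorem applyC_sum {ι : Type} (c : OCtx X Op ar) (t : Finset ι) (f : ι → OPoly X Op ar k) :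
    applyC c (∑ i ∈ t, f i) = ∑ i ∈ t, applyC c (f i) :=
  map_sum (Finsupp.mapDomain.addMonoidHom c.subst) f t

theorem applyC_applyC (c d : OCtx X Op ar) (p : OPoly X Op ar k) :
    applyC c (applyC d p) = applyC (c.comp d) p := by
  unfold applyC
  rw [← Finsupp.mapDomain_comp]
  congr 1
  funext u
  simp [Function.comp, OCtx.subst_comp]

theorem applyC_congr {c c' : OCtx X Op ar} (h : ∀ u, c.subst u = c'.subst u)
    (p : OPoly X Op ar k) : applyC c p = applyC c' p := by
  unfold applyC
  rw [funext h]

theorem applyC_eq_sum (c : OCtx X Op ar) (p : OPoly X Op ar k) :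
    applyC c p = ∑ u ∈ p.support, Finsupp.single (c.subst u) (p u) := rfl

section Ord

variable [LinearOrder (OW X Op ar)]
variable (hmon : ∀ (c : OCtx X Op ar) (u v : OW X Op ar), u < v → c.subst u < c.subst v)
include hmon

theorem subst_injective (c : OCtx X Op ar) : Function.Injective c.subst :=
  (show StrictMono c.subst from fun _ _ h => hmon c _ _ h).injective

theorem subst_le (c : OCtx X Op ar) {u v : OW X Op ar} (h : u ≤ v) :
    c.subst u ≤ c.subst v :=
  (show StrictMono c.subst from fun _ _ h => hmon c _ _ h).monotone h

theorem applyC_apply_lead (c : OCtx X Op ar) (p : OPoly X Op ar k) (u : OW X Op ar) :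
    (applyC c p) (c.subst u) = p u :=
  Finsupp.mapDomain_apply (subst_injective hmon c) p u

theorem applyC_support_le (c : OCtx X Op ar) {p : OPoly X Op ar k} {wp : OW X Op ar}
    (hp : IsLw p wp) : ∀ v ∈ (applyC c p).support, v ≤ c.subst wp := by
  classical
  intro v hv
  have := Finsupp.mapDomain_support hv
  obtain ⟨u, hu, rfl⟩ := Finset.mem_image.mp this
  exact subst_le hmon c (hp.2 u hu)

omit hmon in
theorem IsLw.unique {p : OPoly X Op ar k} {w w' : OW X Op ar}
    (h : IsLw p w) (h' : IsLw p w') : w = w' :=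
  le_antisymm (h'.2 w h.1) (h.2 w' h'.1)

omit hmon in
theorem monic_coeff {p : OPoly X Op ar k} {w : OW X Op ar} (hm : Monic p)
    (h : IsLw p w) : p w = 1 := by
  obtain ⟨w0, hw0, h1⟩ := hm
  rwa [h.unique hw0]

omit hmon in
theorem supp_sub_single_lt {p : OPoly X Op ar k} {w : OW X Op ar} (h : IsLw p w)
    (h1 : p w = 1) : ∀ u ∈ (p - Finsupp.single w (1:k)).support, u < w := by
  intro u hu
  have hne : u ≠ w := by
    intro he
    subst he
    simp [Finsupp.mem_support_iff, h1] at hu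
  have hmem : u ∈ p.support := by
    rw [Finsupp.mem_support_iff] at hu ⊢
    simpa [Finsupp.single_eq_of_ne' (Ne.symm hne)] using hu
  exact lt_of_le_of_ne (h.2 u hmem) hne

end Ord

/-- The bilinear double substitution. -/
noncomputable def B2 (E : OCtx2 X Op ar) (p q : OPoly X Op ar k) : OPoly X Op ar k :=
  ∑ v ∈ q.support, q v • applyC (E.fix2 v) p

theorem B2_swap (E : OCtx2 X Op ar) (p q : OPoly X Op ar k) :
    B2 E p q = ∑ u ∈ p.support, p u • applyC (E.fix1 u) q := by
  unfold B2
  calc ∑ v ∈ q.support, q v • applyC (E.fix2 v) p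
      = ∑ v ∈ q.support, ∑ u ∈ p.support,
          Finsupp.single (E.subst2 u v) (p u * q v) := by
        refine Finset.sum_congr rfl fun v _ => ?_
        rw [applyC_eq_sum, Finset.smul_sum]
        refine Finset.sum_congr rfl fun u _ => ?_
        rw [Finsupp.smul_single, smul_eq_mul, OCtx2.fix2_subst, mul_comm]
    _ = ∑ u ∈ p.support, ∑ v ∈ q.support,
          Finsupp.single (E.subst2 u v) (p u * q v) := Finset.sum_comm
    _ = ∑ u ∈ p.support, p u • applyC (E.fix1 u) q := by
        refine Finset.sum_congr rfl fun u _ => ?_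
        rw [applyC_eq_sum, Finset.smul_sum]
        refine Finset.sum_congr rfl fun v _ => ?_
        rw [Finsupp.smul_single, smul_eq_mul, OCtx2.fix1_subst]

theorem B2_single_right (E : OCtx2 X Op ar) (p : OPoly X Op ar k) (w : OW X Op ar) :
    B2 E p (Finsupp.single w (1:k)) = applyC (E.fix2 w) p := by
  unfold B2
  rw [Finsupp.support_single_ne_zero _ one_ne_zero, Finset.sum_singleton,
    Finsupp.single_eq_same, one_smul]

theorem B2_single_left (E : OCtx2 X Op ar) (q : OPoly X Op ar k) (w : OW X Op ar) :
    B2 E (Finsupp.single w (1:k)) q = applyC (E.fix1 w) q := by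
  rw [B2_swap, Finsupp.support_single_ne_zero _ one_ne_zero, Finset.sum_singleton,
    Finsupp.single_eq_same, one_smul]

theorem B2_sub_left (E : OCtx2 X Op ar) (p p' q : OPoly X Op ar k) :
    B2 E (p - p') q = B2 E p q - B2 E p' q := by
  unfold B2
  rw [← Finset.sum_sub_distrib]
  refine Finset.sum_congr rfl fun v _ => ?_
  rw [applyC_sub, smul_sub]

theorem B2_sub_right (E : OCtx2 X Op ar) (p q q' : OPoly X Op ar k) :
    B2 E p (q - q') = B2 E p q - B2 E p q' := by
  rw [B2_swap, B2_swap, B2_swap, ← Finset.sum_sub_distrib]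
  refine Finset.sum_congr rfl fun u _ => ?_
  rw [applyC_sub, smul_sub]

theorem disjoint_identity (E : OCtx2 X Op ar) (p q : OPoly X Op ar k)
    (wi wj : OW X Op ar) :
    applyC (E.fix2 wj) p - applyC (E.fix1 wi) q
      = ∑ u ∈ (p - Finsupp.single wi (1:k)).support,
          (p - Finsupp.single wi (1:k)) u • applyC (E.fix1 u) q
        - ∑ v ∈ (q - Finsupp.single wj (1:k)).support,
          (q - Finsupp.single wj (1:k)) v • applyC (E.fix2 v) p := by
  have h1 : applyC (E.fix2 wj) p
      = B2 E p q - B2 E p (q - Finsupp.single wj (1:k)) := by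
    rw [B2_sub_right, ← B2_single_right E p wj]
    abel
  have h2 : applyC (E.fix1 wi) q
      = B2 E p q - B2 E (p - Finsupp.single wi (1:k)) q := by
    rw [B2_sub_left, ← B2_single_left E q wi]
    abel
  rw [h1, h2, B2_swap E (p - Finsupp.single wi (1:k)) q]
  unfold B2
  abel

end Aux2
open Classical in
theorem key {X Op : Type} {ar : Op → ℕ} {k : Type} [Field k] [LinearOrder (OW X Op ar)]
    [WellFoundedLT (OW X Op ar)]
    (hmon : ∀ (c : OCtx X Op ar) (u v : OW X Op ar), u < v → c.subst u < c.subst v)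
    (S : Set (OPoly X Op ar k)) (hS : ∀ s ∈ S, Monic s) (hgsb : IsGSB S)
    (w : OW X Op ar) :
    ∀ (W : OW X Op ar) (m : ℕ) (ι : Type) [Fintype ι] (α : ι → k)
      (c : ι → OCtx X Op ar) (s : ι → OPoly X Op ar k) (ws : ι → OW X Op ar),
      (∀ i, s i ∈ S) → (∀ i, IsLw (s i) (ws i)) →
      (∀ i, α i ≠ 0 → (c i).subst (ws i) ≤ W) →
      (Finset.univ.filter (fun i => α i ≠ 0 ∧ (c i).subst (ws i) = W)).card ≤ m →
      IsLw (∑ i, α i • applyC (c i) (s i)) w →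
      ∃ (c0 : OCtx X Op ar) (s0 : OPoly X Op ar k) (ws0 : OW X Op ar),
        s0 ∈ S ∧ IsLw s0 ws0 ∧ w = c0.subst ws0 := by
  intro W
  induction W using WellFoundedLT.induction with
  | _ W IHW =>
  intro m
  induction m using Nat.strong_induction_on with
  | _ m IHm =>
  intro ι instι α c s ws hsS hws hbound hcard hlw
  set T := Finset.univ.filter (fun i => α i ≠ 0 ∧ (c i).subst (ws i) = W) with hTdef
  rcases Nat.lt_or_ge T.card 2 with hc2 | hc2
  · rcases (by omega : T.card = 0 ∨ T.card = 1) with hT0 | hT1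
    · -- T empty: decrease the bound W
      by_cases hall : ∀ i, α i = 0
      · exfalso
        have hz : (∑ i, α i • applyC (c i) (s i)) = 0 :=
          Finset.sum_eq_zero fun i _ => by rw [hall i, zero_smul]
        rw [hz] at hlw
        simpa using hlw.1
      · push_neg at hall
        obtain ⟨i₀, hi₀⟩ := hall
        set N := Finset.univ.filter (fun i => α i ≠ 0) with hNdef
        have hNne : N.Nonempty := ⟨i₀, Finset.mem_filter.mpr ⟨Finset.mem_univ _, hi₀⟩⟩
        set dd := fun i => (c i).subst (ws i) with hdd
        have himne : (N.image dd).Nonempty := hNne.image dd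
        set W' := (N.image dd).max' himne with hW'
        have hW'W : W' < W := by
          obtain ⟨i₁, hi₁N, hdi₁⟩ := Finset.mem_image.mp ((N.image dd).max'_mem himne)
          have hαi₁ : α i₁ ≠ 0 := (Finset.mem_filter.mp hi₁N).2
          have h1 : dd i₁ ≤ W := hbound i₁ hαi₁
          have h2 : dd i₁ ≠ W := by
            intro he
            have : i₁ ∈ T := Finset.mem_filter.mpr ⟨Finset.mem_univ _, hαi₁, he⟩
            have := Finset.card_pos.mpr ⟨i₁, this⟩
            omega
          rw [hW', ← hdi₁]
          exact lt_of_le_of_ne h1 h2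
        refine IHW W' hW'W
          (Finset.univ.filter (fun i => α i ≠ 0 ∧ (c i).subst (ws i) = W')).card
          ι α c s ws hsS hws ?_ le_rfl hlw
        intro i hi
        exact Finset.le_max' _ _ (Finset.mem_image_of_mem dd
          (Finset.mem_filter.mpr ⟨Finset.mem_univ _, hi⟩))
    · -- unique maximal term
      obtain ⟨i₀, hTi⟩ := Finset.card_eq_one.mp hT1
      have hi₀T : i₀ ∈ T := hTi ▸ Finset.mem_singleton_self i₀
      obtain ⟨-, hαi₀, hdi₀⟩ := Finset.mem_filter.mp hi₀T
      set f := ∑ i, α i • applyC (c i) (s i) with hf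
      have hterm0 : ∀ t, t ≠ i₀ → (α t • applyC (c t) (s t)) W = 0 := by
        intro t ht
        by_cases hαt : α t = 0
        · rw [hαt, zero_smul]; rfl
        · have hdt : (c t).subst (ws t) ≠ W := by
            intro he
            exact ht (Finset.mem_singleton.mp
              (hTi ▸ Finset.mem_filter.mpr ⟨Finset.mem_univ _, hαt, he⟩))
          have hdtlt : (c t).subst (ws t) < W :=
            lt_of_le_of_ne (hbound t hαt) hdt
          rw [Finsupp.smul_apply]
          have : W ∉ (applyC (c t) (s t)).support := by
            intro hmem
            exact absurd (applyC_support_le hmon (c t) (hws t) W hmem)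
              (not_le.mpr hdtlt)
          rw [Finsupp.notMem_support_iff.mp this, smul_zero]
      have hfW : f W = α i₀ * (s i₀) (ws i₀) := by
        rw [hf, Finsupp.finset_sum_apply, Finset.sum_eq_single i₀
          (fun t _ ht => hterm0 t ht) (fun h => absurd (Finset.mem_univ i₀) h)]
        rw [Finsupp.smul_apply, ← hdi₀, applyC_apply_lead hmon, smul_eq_mul]
      have hsne : (s i₀) (ws i₀) ≠ 0 := Finsupp.mem_support_iff.mp (hws i₀).1
      have hWsupp : W ∈ f.support :=
        Finsupp.mem_support_iff.mpr (hfW ▸ mul_ne_zero hαi₀ hsne)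
      have hWw : W ≤ w := hlw.2 W hWsupp
      have hwW : w ≤ W := by
        have hw : w ∈ f.support := hlw.1
        obtain ⟨t, -, hwt⟩ := Finset.mem_biUnion.mp (Finsupp.support_finset_sum hw)
        have hαt : α t ≠ 0 := by
          intro he
          rw [he, zero_smul] at hwt
          simpa using hwt
        have hwt' : w ∈ (applyC (c t) (s t)).support :=
          Finsupp.support_smul hwt
        exact le_trans (applyC_support_le hmon (c t) (hws t) w hwt') (hbound t hαt)
      exact ⟨c i₀, s i₀, ws i₀, hsS i₀, hws i₀, by rw [le_antisymm hwW hWw, hdi₀]⟩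
  · -- at least two maximal terms
    have goalstep : ∀ (a b : ι), a ∈ T → b ∈ T → a ≠ b →
        ∀ (κ : Type) [Fintype κ] (γ : κ → k) (e : κ → OCtx X Op ar)
          (σ : κ → OPoly X Op ar k) (wσ : κ → OW X Op ar),
          (∀ l, σ l ∈ S) → (∀ l, IsLw (σ l) (wσ l)) →
          (∀ l, (e l).subst (wσ l) < W) →
          (α a • applyC (c a) (s a)
            = α a • applyC (c b) (s b) + ∑ l, γ l • applyC (e l) (σ l)) →
          ∃ (c0 : OCtx X Op ar) (s0 : OPoly X Op ar k) (ws0 : OW X Op ar),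
            s0 ∈ S ∧ IsLw s0 ws0 ∧ w = c0.subst ws0 := by
      intro a b haT hbT hab κ instκ γ e σ wσ hσS hσlw hσlt hident
      obtain ⟨-, hαa, hda⟩ := Finset.mem_filter.mp haT
      obtain ⟨-, hαb, hdb⟩ := Finset.mem_filter.mp hbT
      set α' : ι ⊕ κ → k :=
        Sum.elim (fun t => if t = a then 0 else if t = b then α b + α a else α t) γ
        with hα'
      set c' : ι ⊕ κ → OCtx X Op ar := Sum.elim c e with hc'
      set s' : ι ⊕ κ → OPoly X Op ar k := Sum.elim s σ with hs'
      set ws' : ι ⊕ κ → OW X Op ar := Sum.elim ws wσ with hws'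
      have hsum : ∑ t : ι ⊕ κ, α' t • applyC (c' t) (s' t)
          = ∑ i, α i • applyC (c i) (s i) := by
        rw [Fintype.sum_sum_type]
        have h1 : ∑ t : ι, α' (Sum.inl t) • applyC (c' (Sum.inl t)) (s' (Sum.inl t))
            = ∑ t : ι, (α t • applyC (c t) (s t)
              + (α' (Sum.inl t) - α t) • applyC (c t) (s t)) := by
          refine Finset.sum_congr rfl fun t _ => ?_
          rw [hc', hs']
          simp only [Sum.elim_inl]
          rw [sub_smul]
          abel
        rw [h1, Finset.sum_add_distrib]
        have h2 : ∑ t : ι, (α' (Sum.inl t) - α t) • applyC (c t) (s t)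
            = ∑ t ∈ ({a, b} : Finset ι),
              (α' (Sum.inl t) - α t) • applyC (c t) (s t) := by
          refine (Finset.sum_subset (Finset.subset_univ _) ?_).symm
          intro x _ hx
          have hxa : x ≠ a := fun h => hx (by rw [h]; exact Finset.mem_insert_self _ _)
          have hxb : x ≠ b := fun h => hx (by rw [h]; simp)
          rw [hα']
          simp only [Sum.elim_inl, if_neg hxa, if_neg hxb, sub_self, zero_smul]
        rw [h2, Finset.sum_pair hab, hα']
        simp only [Sum.elim_inl, eq_self_iff_true, if_true, if_pos rfl, if_neg (Ne.symm hab)]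
        rw [hc', hs']
        simp only [Sum.elim_inr]
        have h3 : ∑ l : κ, γ l • applyC (e l) (σ l)
            = α a • applyC (c a) (s a) - α a • applyC (c b) (s b) := by
          rw [hident]; abel
        rw [h3, show (0:k) - α a = -α a by ring,
          show α b + α a - α b = α a by ring, neg_smul]
        abel
      have hbound' : ∀ t, α' t ≠ 0 → (c' t).subst (ws' t) ≤ W := by
        rintro (t | l) hne
        · rw [hα'] at hne
          simp only [Sum.elim_inl] at hne
          rw [hc', hws']
          simp only [Sum.elim_inl]
          by_cases hta : t = a
          · rw [if_pos hta] at hne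
            exact absurd rfl hne
          · by_cases htb : t = b
            · subst htb; exact hdb.le
            · rw [if_neg hta, if_neg htb] at hne
              exact hbound t hne
        · rw [hc', hws']
          simp only [Sum.elim_inr]
          exact (hσlt l).le
      have hcard' :
          (Finset.univ.filter
            (fun t : ι ⊕ κ => α' t ≠ 0 ∧ (c' t).subst (ws' t) = W)).card
            ≤ T.card - 1 := by
        have hsub : (Finset.univ.filter
            (fun t : ι ⊕ κ => α' t ≠ 0 ∧ (c' t).subst (ws' t) = W))
            ⊆ (T.erase a).map ⟨Sum.inl, Sum.inl_injective⟩ := by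
          rintro (t | l) hmem
          · obtain ⟨-, hne, hdW⟩ := Finset.mem_filter.mp hmem
            rw [hc', hws'] at hdW
            simp only [Sum.elim_inl] at hdW
            rw [hα'] at hne
            simp only [Sum.elim_inl] at hne
            refine Finset.mem_map.mpr ⟨t, ?_, rfl⟩
            have hta : t ≠ a := fun h => hne (by rw [if_pos h])
            refine Finset.mem_erase.mpr ⟨hta, ?_⟩
            by_cases htb : t = b
            · subst htb; exact hbT
            · rw [if_neg hta, if_neg htb] at hne
              exact Finset.mem_filter.mpr ⟨Finset.mem_univ _, hne, hdW⟩
          · exfalso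
            obtain ⟨-, -, hdW⟩ := Finset.mem_filter.mp hmem
            rw [hc', hws'] at hdW
            simp only [Sum.elim_inr] at hdW
            exact absurd hdW (ne_of_lt (hσlt l))
        calc (Finset.univ.filter
            (fun t : ι ⊕ κ => α' t ≠ 0 ∧ (c' t).subst (ws' t) = W)).card
            ≤ ((T.erase a).map ⟨Sum.inl, Sum.inl_injective⟩).card :=
              Finset.card_le_card hsub
          _ = (T.erase a).card := Finset.card_map _
          _ = T.card - 1 := Finset.card_erase_of_mem haT
      have hm1 : T.card - 1 < m := by omega
      exact IHm (T.card - 1) hm1 (ι ⊕ κ) α' c' s' ws'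
        (by rintro (t | l); exacts [hsS t, hσS l])
        (by rintro (t | l); exacts [hws t, hσlw l])
        hbound' hcard' (by rw [hsum]; exact hlw)
    have nested : ∀ (a b : ι), a ∈ T → b ∈ T → a ≠ b → ∀ E : OCtx X Op ar,
        (∀ x, (c b).subst x = (c a).subst (E.subst x)) → ws a = E.subst (ws b) →
        ∃ (c0 : OCtx X Op ar) (s0 : OPoly X Op ar k) (ws0 : OW X Op ar),
          s0 ∈ S ∧ IsLw s0 ws0 ∧ w = c0.subst ws0 := by
      intro a b haT hbT hab E hE hvab
      obtain ⟨-, hαa, hda⟩ := Finset.mem_filter.mp haT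
      obtain ⟨N, β, e0, σ0, hσ0S, hsum0, hlt0⟩ :=
        hgsb (s a) (hsS a) (s b) (hsS b) E (ws a) (ws b) (hws a) (hws b) hvab
      have hex : ∀ l, ∃ w0, IsLw (σ0 l) w0 := by
        intro l
        obtain ⟨w0, hw0, -⟩ := hS (σ0 l) (hσ0S l)
        exact ⟨w0, hw0⟩
      choose wσ0 hwσ0 using hex
      refine goalstep a b haT hbT hab (Fin N) (fun l => α a * β l)
        (fun l => (c a).comp (e0 l)) σ0 wσ0 hσ0S hwσ0 ?_ ?_
      · intro l
        rw [OCtx.subst_comp, ← hda]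
        exact hmon (c a) _ _ (hlt0 l (wσ0 l) (hwσ0 l))
      · have h4 : applyC (c a) (applyC E (s b)) = applyC (c b) (s b) := by
          rw [applyC_applyC]
          exact applyC_congr (fun u => by rw [OCtx.subst_comp, ← hE u]) (s b)
        have h3 : applyC (c a) (s a) - applyC (c b) (s b)
            = ∑ l, β l • applyC ((c a).comp (e0 l)) (σ0 l) := by
          rw [← h4, ← applyC_sub, hsum0, applyC_sum]
          refine Finset.sum_congr rfl fun l _ => ?_
          rw [applyC_smul, applyC_applyC]
        have h5 : applyC (c a) (s a)
            = applyC (c b) (s b) + ∑ l, β l • applyC ((c a).comp (e0 l)) (σ0 l) := by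
          rw [← h3]; abel
        rw [h5, smul_add, Finset.smul_sum]
        congr 1
        refine Finset.sum_congr rfl fun l _ => ?_
        rw [smul_smul]
    obtain ⟨i, hiT, j, hjT, hij⟩ := Finset.one_lt_card.mp hc2
    have hdi : (c i).subst (ws i) = W := (Finset.mem_filter.mp hiT).2.2
    have hdj : (c j).subst (ws j) = W := (Finset.mem_filter.mp hjT).2.2
    rcases trichotomy (c i) (c j) (ws i) (ws j) (hdi.trans hdj.symm) with
      ⟨E, hE, hv⟩ | ⟨E, hE, hu⟩ | ⟨E, hE1, hE2⟩
    · exact nested j i hjT hiT (Ne.symm hij) E hE hv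
    · exact nested i j hiT hjT hij E hE hu
    · -- disjoint case
      obtain ⟨-, hαi, -⟩ := Finset.mem_filter.mp hiT
      obtain ⟨-, hαj, -⟩ := Finset.mem_filter.mp hjT
      have hpi : s i (ws i) = 1 := monic_coeff (hS _ (hsS i)) (hws i)
      have hpj : s j (ws j) = 1 := monic_coeff (hS _ (hsS j)) (hws j)
      set rp := s i - Finsupp.single (ws i) (1:k) with hrp
      set rq := s j - Finsupp.single (ws j) (1:k) with hrq
      have hci : applyC (c i) (s i) = applyC (E.fix2 (ws j)) (s i) :=
        applyC_congr (fun u => by rw [hE1 u, OCtx2.fix2_subst]) (s i)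
      have hcj : applyC (c j) (s j) = applyC (E.fix1 (ws i)) (s j) :=
        applyC_congr (fun u => by rw [hE2 u, OCtx2.fix1_subst]) (s j)
      have hid := disjoint_identity E (s i) (s j) (ws i) (ws j)
      rw [← hrp, ← hrq, ← hci, ← hcj] at hid
      refine goalstep i j hiT hjT hij ((↥rp.support) ⊕ (↥rq.support))
        (Sum.elim (fun u => α i * rp u) (fun v => α i * (- rq v)))
        (Sum.elim (fun u => E.fix1 u) (fun v => E.fix2 v))
        (Sum.elim (fun _ => s j) (fun _ => s i))
        (Sum.elim (fun _ => ws j) (fun _ => ws i))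
        (by rintro (u | v); exacts [hsS j, hsS i])
        (by rintro (u | v); exacts [hws j, hws i]) ?_ ?_
      · rintro (u | v)
        · simp only [Sum.elim_inl]
          have hu : (u : OW X Op ar) < ws i :=
            supp_sub_single_lt (hws i) hpi u u.2
          rw [OCtx2.fix1_subst, ← hE1 u, ← hdi]
          exact hmon (c i) _ _ hu
        · simp only [Sum.elim_inr]
          have hv : (v : OW X Op ar) < ws j :=
            supp_sub_single_lt (hws j) hpj v v.2
          rw [OCtx2.fix2_subst, ← hE2 v, ← hdj]
          exact hmon (c j) _ _ hv
      · rw [Fintype.sum_sum_type]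
        simp only [Sum.elim_inl, Sum.elim_inr]
        rw [Finset.sum_coe_sort rp.support
            (fun u => (α i * rp u) • applyC (E.fix1 u) (s j)),
          Finset.sum_coe_sort rq.support
            (fun v => (α i * (- rq v)) • applyC (E.fix2 v) (s i))]
        have hid2 : applyC (c i) (s i)
            = applyC (c j) (s j)
              + (∑ u ∈ rp.support, rp u • applyC (E.fix1 u) (s j)
                - ∑ v ∈ rq.support, rq v • applyC (E.fix2 v) (s i)) := by
          rw [← hid]; abel
        rw [hid2, smul_add, smul_sub, Finset.smul_sum, Finset.smul_sum]
        have e1 : ∑ u ∈ rp.support, α i • rp u • applyC (E.fix1 u) (s j)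
            = ∑ u ∈ rp.support, (α i * rp u) • applyC (E.fix1 u) (s j) :=
          Finset.sum_congr rfl fun u _ => by rw [smul_smul]
        have e2 : ∑ v ∈ rq.support, α i • rq v • applyC (E.fix2 v) (s i)
            = ∑ v ∈ rq.support, (α i * rq v) • applyC (E.fix2 v) (s i) :=
          Finset.sum_congr rfl fun v _ => by rw [smul_smul]
        rw [e1, e2]
        have e3 : ∑ v ∈ rq.support, (α i * - rq v) • applyC (E.fix2 v) (s i)
            = - ∑ v ∈ rq.support, (α i * rq v) • applyC (E.fix2 v) (s i) := by
          rw [← Finset.sum_neg_distrib]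
          refine Finset.sum_congr rfl fun v _ => ?_
          rw [mul_neg, neg_smul]
        rw [e3]
        abel
/-- with a monomial well-ordering, if S is a set of monic
Ω-polynomials forming a Gröbner–Shirshov basis, then the leading word of any
nonzero element of Id(S) contains the leading word of some s ∈ S as a subword. -/
theorem gsb_leading_word (X Op : Type) (ar : Op → ℕ) (har : ∀ f, 1 ≤ ar f)
    (k : Type) [Field k] [LinearOrder (OW X Op ar)] [WellFoundedLT (OW X Op ar)]
    (hmon : ∀ (c : OCtx X Op ar) (u v : OW X Op ar), u < v → c.subst u < c.subst v)
    (S : Set (OPoly X Op ar k)) (hS : ∀ s ∈ S, Monic s) (hgsb : IsGSB S) :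
    ∀ f ∈ IdS S, f ≠ 0 → ∀ w, IsLw f w →
      ∃ (c : OCtx X Op ar) (s : OPoly X Op ar k) (ws : OW X Op ar),
        s ∈ S ∧ IsLw s ws ∧ w = c.subst ws := by
  intro f hf hf0 w hlw
  classical
  have hf' : f ∈ Submodule.span k {g | ∃ (c : OCtx X Op ar) (s : OPoly X Op ar k),
      s ∈ S ∧ g = applyC c s} := hf
  obtain ⟨n, α, g, hsum⟩ := Submodule.mem_span_set'.mp hf'
  have hg : ∀ i : Fin n, ∃ (cc : OCtx X Op ar) (ss : OPoly X Op ar k),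
      ss ∈ S ∧ (g i : OPoly X Op ar k) = applyC cc ss := fun i => (g i).2
  choose cc ss hssS hgeq using hg
  have hex : ∀ i, ∃ w0, IsLw (ss i) w0 := by
    intro i
    obtain ⟨w0, hw0, -⟩ := hS (ss i) (hssS i)
    exact ⟨w0, hw0⟩
  choose wss hwss using hex
  have hfsum : f = ∑ i, α i • applyC (cc i) (ss i) := by
    rw [← hsum]
    exact Finset.sum_congr rfl fun i _ => by rw [hgeq i]
  rcases isEmpty_or_nonempty (Fin n) with he | hne
  · exfalso
    apply hf0
    rw [hfsum, Finset.univ_eq_empty, Finset.sum_empty]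
  · set dd := fun i => (cc i).subst (wss i) with hdd
    have himne : (Finset.univ.image dd).Nonempty :=
      Finset.univ_nonempty.image dd
    set W := (Finset.univ.image dd).max' himne with hW
    exact key hmon S hS hgsb w W
      (Finset.univ.filter (fun i => α i ≠ 0 ∧ (cc i).subst (wss i) = W)).card
      (Fin n) α cc ss wss hssS hwss
      (fun i _ => Finset.le_max' _ _ (Finset.mem_image_of_mem dd (Finset.mem_univ i)))
      le_rfl (by rw [← hfsum]; exact hlw)
end

section
/- Every countably generated L-algebra over a field k embeds into an L-algebra generated by two elements. -/
/-- A bundled L-algebra over k: a k-vector space with two bilinear operations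
≺ (`pre`) and ≻ (`suc`) satisfying (x≻y)≺z = x≻(y≺z). -/
structure LAlg (k : Type) [Field k] where
  carrier : Type
  [addCommGroup : AddCommGroup carrier]
  [module : Module k carrier]
  pre : carrier →ₗ[k] carrier →ₗ[k] carrier
  suc : carrier →ₗ[k] carrier →ₗ[k] carrier
  entangle : ∀ x y z : carrier, pre (suc x y) z = suc x (pre y z)

attribute [instance] LAlg.addCommGroup LAlg.module

variable {k : Type} [Field k]

/-- A homomorphism of L-algebras: a k-linear map preserving both operations. -/
def IsLHom (A B : LAlg k) (f : A.carrier →ₗ[k] B.carrier) : Prop :=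
  (∀ x y : A.carrier, f (A.pre x y) = B.pre (f x) (f y)) ∧
  (∀ x y : A.carrier, f (A.suc x y) = B.suc (f x) (f y))

/-- `LGen A s`: the set s generates A as an L-algebra, i.e. the only subspace
containing s and closed under both operations is the whole of A. -/
def LGen (A : LAlg k) (s : Set A.carrier) : Prop :=
  ∀ p : Submodule k A.carrier, s ⊆ p →
    (∀ a ∈ p, ∀ b ∈ p, A.pre a b ∈ p ∧ A.suc a b ∈ p) → ∀ x : A.carrier, x ∈ p

/-- An ideal of an L-algebra: a subspace I with a≺b, b≺a, a≻b, b≻a ∈ I for all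
a ∈ I and b in the algebra. -/
def IsLIdeal (A : LAlg k) (I : Submodule k A.carrier) : Prop :=
  ∀ a ∈ I, ∀ b : A.carrier,
    A.pre a b ∈ I ∧ A.pre b a ∈ I ∧ A.suc a b ∈ I ∧ A.suc b a ∈ I

/-- A simple L-algebra: no ideals other than 0 and itself. -/
def LSimple (A : LAlg k) : Prop :=
  ∀ I : Submodule k A.carrier, IsLIdeal A I → I = ⊥ ∨ I = ⊤
section LConstr
variable (A : LAlg k) (g : ℕ → A.carrier)

noncomputable def lmu : TensorAlgebra k A.carrier →ₐ[k] Module.End k A.carrier :=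
  TensorAlgebra.lift k (A.suc : A.carrier →ₗ[k] Module.End k A.carrier)

noncomputable def lze : TensorAlgebra k A.carrier →ₐ[k] k :=
  TensorAlgebra.lift k (0 : A.carrier →ₗ[k] k)

@[simp] lemma lmu_ι (a : A.carrier) : lmu A (TensorAlgebra.ι k a) = A.suc a :=
  TensorAlgebra.lift_ι_apply _ _

@[simp] lemma lze_ι (a : A.carrier) : lze A (TensorAlgebra.ι k a) = 0 := by
  have := TensorAlgebra.lift_ι_apply (0 : A.carrier →ₗ[k] k) a
  simpa [lze] using this

abbrev LCar := A.carrier × A.carrier × (ℕ →₀ TensorAlgebra k A.carrier)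

noncomputable def SfunD (a : A.carrier) (G : ℕ →₀ TensorAlgebra k A.carrier) :
    ℕ →₀ TensorAlgebra k A.carrier :=
  Finsupp.onFinset G.support (fun m => TensorAlgebra.ι k a * G m)
    (fun m h => Finsupp.mem_support_iff.2 (fun h0 => h (by simp only [h0, mul_zero])))

@[simp] lemma SfunD_apply (a : A.carrier) (G : ℕ →₀ TensorAlgebra k A.carrier) (m : ℕ) :
    SfunD A a G m = TensorAlgebra.ι k a * G m := rfl

noncomputable def Sfun (x y : LCar A) : LCar A :=
  (A.suc x.1 y.1, A.suc x.1 y.2.1, SfunD A x.1 y.2.2)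

noncomputable def PfunD (F G : ℕ →₀ TensorAlgebra k A.carrier) :
    ℕ →₀ TensorAlgebra k A.carrier :=
  Finsupp.onFinset (G.support.image (· + 1))
    (fun j => if 2 ≤ j then lze A (G (j-1)) • F 0 else 0)
    (by
      intro j h
      have h2 : 2 ≤ j := by by_contra hc; rw [if_neg hc] at h; exact h rfl
      rw [if_pos h2] at h
      have : G (j-1) ≠ 0 := by
        intro h0; rw [h0, map_zero, zero_smul] at h; exact h rfl
      refine Finset.mem_image.2 ⟨j-1, Finsupp.mem_support_iff.2 this, by omega⟩)

@[simp] lemma PfunD_apply (F G : ℕ →₀ TensorAlgebra k A.carrier) (j : ℕ) :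
    PfunD A F G j = if 2 ≤ j then lze A (G (j-1)) • F 0 else 0 := rfl

noncomputable def Pfun (x y : LCar A) : LCar A :=
  (A.pre x.1 y.1 + lmu A (x.2.2.sum fun _ w => w) y.2.1,
   lze A (y.2.2 0) • (x.1 + x.2.2.sum fun m w => lmu A w (g m)),
   PfunD A x.2.2 y.2.2)


lemma sfund_sum {M : Type*} [AddCommMonoid M] (a : A.carrier)
    (G : ℕ →₀ TensorAlgebra k A.carrier) (f : ℕ → TensorAlgebra k A.carrier → M)
    (hf : ∀ m, f m 0 = 0) :
    (SfunD A a G).sum f = G.sum (fun m w => f m (TensorAlgebra.ι k a * w)) := by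
  rw [SfunD, Finsupp.onFinset_sum _ hf]
  rfl

lemma Sfun_add_left (x₁ x₂ y : LCar A) :
    Sfun A (x₁ + x₂) y = Sfun A x₁ y + Sfun A x₂ y := by
  refine Prod.ext (by simp [Sfun]) (Prod.ext (by simp [Sfun]) ?_)
  ext j
  simp [Sfun, add_mul]

lemma Sfun_smul_left (c : k) (x y : LCar A) : Sfun A (c • x) y = c • Sfun A x y := by
  refine Prod.ext (by simp [Sfun]) (Prod.ext (by simp [Sfun]) ?_)
  ext j
  simp [Sfun, smul_mul_assoc]

lemma Sfun_add_right (x y₁ y₂ : LCar A) :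
    Sfun A x (y₁ + y₂) = Sfun A x y₁ + Sfun A x y₂ := by
  refine Prod.ext (by simp [Sfun]) (Prod.ext (by simp [Sfun]) ?_)
  ext j
  simp [Sfun, mul_add]

lemma Sfun_smul_right (c : k) (x y : LCar A) : Sfun A x (c • y) = c • Sfun A x y := by
  refine Prod.ext (by simp [Sfun]) (Prod.ext (by simp [Sfun]) ?_)
  ext j
  simp [Sfun, mul_smul_comm]

lemma Pfun_add_left (x₁ x₂ y : LCar A) :
    Pfun A g (x₁ + x₂) y = Pfun A g x₁ y + Pfun A g x₂ y := by
  refine Prod.ext ?_ (Prod.ext ?_ ?_)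
  · simp only [Pfun, Prod.fst_add, Prod.snd_add]
    rw [Finsupp.sum_add_index' (fun _ => rfl) (fun _ _ _ => rfl)]
    simp only [map_add, LinearMap.add_apply]
    abel
  · simp only [Pfun, Prod.fst_add, Prod.snd_add]
    rw [Finsupp.sum_add_index' (by intro m; simp) (by intro a b c; simp [map_add])]
    simp only [smul_add]
    abel
  · ext j
    simp only [Pfun, Prod.snd_add, Prod.fst_add, PfunD_apply, Finsupp.add_apply]
    split_ifs <;> simp [smul_add]

lemma Pfun_smul_left (c : k) (x y : LCar A) :
    Pfun A g (c • x) y = c • Pfun A g x y := by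
  obtain ⟨a, a', F⟩ := x
  refine Prod.ext ?_ (Prod.ext ?_ ?_)
  · show A.pre (c • a) y.1 + lmu A ((c • F).sum fun _ w => w) y.2.1 = _
    rw [Finsupp.sum_smul_index' (fun _ => rfl)]
    have h1 : (F.sum fun (_ : ℕ) w => c • w) = c • (F.sum fun _ w => w) := by
      rw [Finsupp.smul_sum]
    rw [h1]
    simp [Pfun, smul_add]
  · show lze A (y.2.2 0) • (c • a + (c • F).sum fun m w => lmu A w (g m)) = _
    rw [Finsupp.sum_smul_index' (by intro m; simp)]
    have h1 : (F.sum fun m w => lmu A (c • w) (g m)) =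
        c • (F.sum fun m w => lmu A w (g m)) := by
      rw [Finsupp.smul_sum]; apply Finsupp.sum_congr; intro m _; simp
    rw [h1, ← smul_add, smul_comm]
    rfl
  · ext j
    show PfunD A (c • F) y.2.2 j = (c • PfunD A F y.2.2) j
    simp only [PfunD_apply, Finsupp.smul_apply]
    split_ifs <;> simp [smul_comm c]

lemma Pfun_add_right (x y₁ y₂ : LCar A) :
    Pfun A g x (y₁ + y₂) = Pfun A g x y₁ + Pfun A g x y₂ := by
  refine Prod.ext ?_ (Prod.ext ?_ ?_)
  · simp only [Pfun, Prod.fst_add, Prod.snd_add]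
    simp [map_add]; abel
  · simp only [Pfun, Prod.fst_add, Prod.snd_add, Finsupp.add_apply]
    rw [map_add, add_smul]
  · ext j
    simp only [Pfun, Prod.snd_add, Prod.fst_add, PfunD_apply, Finsupp.add_apply]
    split_ifs <;> simp [add_smul]

lemma Pfun_smul_right (c : k) (x y : LCar A) :
    Pfun A g x (c • y) = c • Pfun A g x y := by
  obtain ⟨b, b', G⟩ := y
  refine Prod.ext ?_ (Prod.ext ?_ ?_)
  · show A.pre x.1 (c • b) + lmu A (x.2.2.sum fun _ w => w) (c • b') = _
    simp [Pfun, smul_add]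
  · show lze A ((c • G) 0) • (x.1 + x.2.2.sum fun m w => lmu A w (g m)) = _
    rw [Finsupp.smul_apply, map_smul, smul_eq_mul, mul_smul]
    rfl
  · ext j
    show PfunD A x.2.2 (c • G) j = (c • PfunD A x.2.2 G) j
    simp only [PfunD_apply, Finsupp.smul_apply, map_smul, smul_eq_mul]
    split_ifs <;> simp [mul_smul]

lemma entangle_key (x y z : LCar A) :
    Pfun A g (Sfun A x y) z = Sfun A x (Pfun A g y z) := by
  obtain ⟨a, a', F⟩ := x
  obtain ⟨b, b', G⟩ := y
  obtain ⟨c, c', H⟩ := z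
  refine Prod.ext ?_ (Prod.ext ?_ ?_)
  · -- plain component
    show A.pre (A.suc a b) c + lmu A ((SfunD A a G).sum fun _ w => w) c' =
      A.suc a (A.pre b c + lmu A (G.sum fun _ w => w) c')
    rw [sfund_sum A a G _ (fun _ => rfl)]
    have h1 : (G.sum fun m w => TensorAlgebra.ι k a * w) =
        TensorAlgebra.ι k a * (G.sum fun _ w => w) := by
      rw [Finsupp.mul_sum]
    rw [h1, map_mul, lmu_ι, map_add, A.entangle]
    rfl
  · -- tilde component
    show lze A (H 0) • (A.suc a b + (SfunD A a G).sum fun m w => lmu A w (g m)) =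
      A.suc a (lze A (H 0) • (b + G.sum fun m w => lmu A w (g m)))
    rw [sfund_sum A a G _ (by intro m; simp)]
    have h1 : (G.sum fun m w => lmu A (TensorAlgebra.ι k a * w) (g m)) =
        A.suc a (G.sum fun m w => lmu A w (g m)) := by
      rw [map_finsuppSum]
      apply Finsupp.sum_congr
      intro m _
      rw [map_mul, lmu_ι]
      rfl
    rw [h1, map_smul, map_add]
  · -- finsupp component
    ext j
    show PfunD A (SfunD A a G) H j = SfunD A a (PfunD A G H) j
    simp only [PfunD_apply, SfunD_apply]
    split_ifs with h
    · rw [mul_smul_comm]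
    · rw [mul_zero]

noncomputable def BAlg : LAlg k where
  carrier := LCar A
  pre := LinearMap.mk₂ k (Pfun A g) (Pfun_add_left A g) (Pfun_smul_left A g)
    (Pfun_add_right A g) (Pfun_smul_right A g)
  suc := LinearMap.mk₂ k (Sfun A) (Sfun_add_left A) (Sfun_smul_left A)
    (Sfun_add_right A) (Sfun_smul_right A)
  entangle := entangle_key A g

noncomputable def eps (n : ℕ) : LCar A :=
  (0, 0, Finsupp.single n (1 : TensorAlgebra k A.carrier))

lemma comp_chain (m : ℕ) : Pfun A g (eps A 0) (eps A (m+1)) = eps A (m+2) := by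
  refine Prod.ext ?_ (Prod.ext ?_ ?_)
  · show A.pre 0 0 + lmu A ((Finsupp.single 0 (1:TensorAlgebra k A.carrier)).sum fun _ w => w) 0 = 0
    simp
  · show lze A (Finsupp.single (m+1) (1:TensorAlgebra k A.carrier) 0) • _ = 0
    rw [Finsupp.single_apply, if_neg (by omega)]
    simp
  · ext j
    show PfunD A (Finsupp.single 0 1) (Finsupp.single (m+1) 1) j
      = Finsupp.single (m+2) (1 : TensorAlgebra k A.carrier) j
    rw [PfunD_apply]
    by_cases hj : j = m + 2
    · subst hj
      rw [if_pos (by omega)]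
      simp [Finsupp.single_apply]
    · have hrhs : Finsupp.single (m+2) (1 : TensorAlgebra k A.carrier) j = 0 :=
        Finsupp.single_eq_of_ne (by omega)
      rw [hrhs]
      split_ifs with h2
      · rw [Finsupp.single_eq_of_ne (by omega), map_zero, zero_smul]
      · rfl

lemma comp_emit (m : ℕ) : Pfun A g (eps A m) (eps A 0) = (0, g m, 0) := by
  refine Prod.ext ?_ (Prod.ext ?_ ?_)
  · show A.pre 0 0 + lmu A (_) 0 = 0
    simp
  · show lze A (Finsupp.single 0 (1:TensorAlgebra k A.carrier) 0) •
      ((0:A.carrier) + (Finsupp.single m (1:TensorAlgebra k A.carrier)).sum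
        fun i w => lmu A w (g i)) = g m
    rw [Finsupp.single_eq_same, map_one, Finsupp.sum_single_index (by simp)]
    simp
  · ext j
    show PfunD A (Finsupp.single m 1) (Finsupp.single 0 1) j = 0
    rw [PfunD_apply]
    split_ifs with h2
    · rw [Finsupp.single_apply, if_neg (by omega), map_zero, zero_smul]
    · rfl

lemma comp_untag (b : A.carrier) : Pfun A g (eps A 0) (0, b, 0) = (b, 0, 0) := by
  refine Prod.ext ?_ (Prod.ext ?_ ?_)
  · show A.pre 0 0 + lmu A ((Finsupp.single 0 (1:TensorAlgebra k A.carrier)).sum fun _ w => w) b = b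
    rw [Finsupp.sum_single_index rfl, map_one]
    simp
  · show lze A ((0 : ℕ →₀ TensorAlgebra k A.carrier) 0) • _ = 0
    simp
  · ext j
    show PfunD A (Finsupp.single 0 1) 0 j = 0
    rw [PfunD_apply]
    split_ifs <;> simp

lemma comp_tag (a : A.carrier) : Pfun A g (a, 0, 0) (eps A 0) = (0, a, 0) := by
  refine Prod.ext ?_ (Prod.ext ?_ ?_)
  · show A.pre a 0 + lmu A ((0 : ℕ →₀ TensorAlgebra k A.carrier).sum fun _ w => w) 0 = 0
    simp
  · show lze A (Finsupp.single 0 (1:TensorAlgebra k A.carrier) 0) •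
      (a + (0 : ℕ →₀ TensorAlgebra k A.carrier).sum fun i w => lmu A w (g i)) = a
    rw [Finsupp.single_eq_same, map_one, Finsupp.sum_zero_index]
    simp
  · ext j
    show PfunD A 0 (Finsupp.single 0 1) j = 0
    rw [PfunD_apply]
    split_ifs <;> simp

lemma comp_pre (a b : A.carrier) : Pfun A g (a, 0, 0) (b, 0, 0) = (A.pre a b, 0, 0) := by
  refine Prod.ext ?_ (Prod.ext ?_ ?_)
  · show A.pre a b + lmu A ((0 : ℕ →₀ TensorAlgebra k A.carrier).sum fun _ w => w) 0 = A.pre a b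
    simp
  · show lze A ((0 : ℕ →₀ TensorAlgebra k A.carrier) 0) • _ = 0
    simp
  · ext j
    show PfunD A 0 0 j = 0
    rw [PfunD_apply]
    split_ifs <;> simp

lemma comp_suc (a b : A.carrier) : Sfun A (a, 0, 0) (b, 0, 0) = (A.suc a b, 0, 0) := by
  refine Prod.ext ?_ (Prod.ext ?_ ?_)
  · rfl
  · show A.suc a 0 = 0
    simp
  · ext j
    show SfunD A a 0 j = 0
    simp

lemma comp_iota (a : A.carrier) (w : TensorAlgebra k A.carrier) (m : ℕ) :
    Sfun A (a, 0, 0) (0, 0, Finsupp.single m w)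
      = (0, 0, Finsupp.single m (TensorAlgebra.ι k a * w)) := by
  refine Prod.ext ?_ (Prod.ext ?_ ?_)
  · show A.suc a 0 = 0
    simp
  · show A.suc a 0 = 0
    simp
  · ext j
    show SfunD A a (Finsupp.single m w) j = Finsupp.single m (TensorAlgebra.ι k a * w) j
    rw [SfunD_apply, Finsupp.single_apply, Finsupp.single_apply]
    split_ifs <;> simp

lemma BAlg_gen (s : Set A.carrier) (hg : s ⊆ Set.range g) (hgen : LGen A s) :
    LGen (BAlg A g) {eps A 0, eps A 1} := by
  intro p hsub hcl
  have hP : ∀ u ∈ p, ∀ v ∈ p, Pfun A g u v ∈ p := fun u hu v hv => (hcl u hu v hv).1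
  have hS : ∀ u ∈ p, ∀ v ∈ p, Sfun A u v ∈ p := fun u hu v hv => (hcl u hu v hv).2
  have h0 : eps A 0 ∈ p := hsub (Set.mem_insert _ _)
  have h1 : eps A 1 ∈ p := hsub (Set.mem_insert_of_mem _ rfl)
  have heps : ∀ n, eps A n ∈ p := by
    have key : ∀ n, eps A n ∈ p ∧ eps A (n+1) ∈ p := by
      intro n
      induction n with
      | zero => exact ⟨h0, h1⟩
      | succ n ih =>
        refine ⟨ih.2, ?_⟩
        have := hP _ h0 _ ih.2
        rwa [comp_chain] at this
    exact fun n => (key n).1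
  have htg : ∀ m, ((0, g m, 0) : LCar A) ∈ p := by
    intro m
    have := hP _ (heps m) _ (heps 0)
    rwa [comp_emit] at this
  have hpg : ∀ m, ((g m, 0, 0) : LCar A) ∈ p := by
    intro m
    have := hP _ (heps 0) _ (htg m)
    rwa [comp_untag] at this
  have hplain : ∀ a : A.carrier, ((a, 0, 0) : LCar A) ∈ p := by
    intro a
    have inc : A.carrier →ₗ[k] LCar A :=
      LinearMap.inl k A.carrier (A.carrier × (ℕ →₀ TensorAlgebra k A.carrier))
    refine hgen (p.comap (LinearMap.inl k A.carrier
      (A.carrier × (ℕ →₀ TensorAlgebra k A.carrier)))) ?_ ?_ a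
    · intro b hb
      obtain ⟨m, hm⟩ := hg hb
      have : ((b, 0, 0) : LCar A) ∈ p := hm ▸ hpg m
      exact this
    · intro b hb c hc
      have hb' : ((b, 0, 0) : LCar A) ∈ p := hb
      have hc' : ((c, 0, 0) : LCar A) ∈ p := hc
      constructor
      · have := hP _ hb' _ hc'
        rw [comp_pre] at this
        exact this
      · have := hS _ hb' _ hc'
        rw [comp_suc] at this
        exact this
  have htilde : ∀ a : A.carrier, ((0, a, 0) : LCar A) ∈ p := by
    intro a
    have := hP _ (hplain a) _ (heps 0)
    rwa [comp_tag] at this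
  have hD : ∀ (w : TensorAlgebra k A.carrier) (m : ℕ),
      ((0, 0, Finsupp.single m w) : LCar A) ∈ p := by
    have main : ∀ w : TensorAlgebra k A.carrier,
        ∀ u : TensorAlgebra k A.carrier,
          (∀ m, ((0, 0, Finsupp.single m u) : LCar A) ∈ p) →
          ∀ m, ((0, 0, Finsupp.single m (w * u)) : LCar A) ∈ p := by
      intro w
      induction w using TensorAlgebra.induction with
      | algebraMap r =>
        intro u hu m
        rw [← Algebra.smul_def]
        have : ((0, 0, Finsupp.single m (r • u)) : LCar A)
            = r • ((0, 0, Finsupp.single m u) : LCar A) := by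
          simp [Prod.smul_mk, Finsupp.smul_single]
        rw [this]
        exact p.smul_mem r (hu m)
      | ι a =>
        intro u hu m
        have := hS _ (hplain a) _ (hu m)
        rwa [comp_iota] at this
      | mul w₁ w₂ ih₁ ih₂ =>
        intro u hu m
        rw [mul_assoc]
        exact ih₁ _ (fun m' => ih₂ _ hu m') m
      | add w₁ w₂ ih₁ ih₂ =>
        intro u hu m
        have : ((0, 0, Finsupp.single m ((w₁ + w₂) * u)) : LCar A)
            = ((0, 0, Finsupp.single m (w₁ * u)) : LCar A)
              + ((0, 0, Finsupp.single m (w₂ * u)) : LCar A) := by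
          simp [add_mul, Finsupp.single_add, Prod.mk_add_mk]
        rw [this]
        exact p.add_mem (ih₁ _ hu m) (ih₂ _ hu m)
    intro w m
    have := main w 1 heps m
    rwa [mul_one] at this
  intro x
  obtain ⟨a, a', F⟩ := x
  have hsplit : ((a, a', F) : LCar A) = (a, 0, 0) + (0, a', 0) + (0, 0, F) := by
    simp [Prod.mk_add_mk]
  rw [hsplit]
  refine p.add_mem (p.add_mem (hplain a) (htilde a')) ?_
  have j3 : (ℕ →₀ TensorAlgebra k A.carrier) →ₗ[k] LCar A :=
    (LinearMap.inr k A.carrier (A.carrier × (ℕ →₀ TensorAlgebra k A.carrier))).comp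
      (LinearMap.inr k A.carrier (ℕ →₀ TensorAlgebra k A.carrier))
  have hF : ((0, 0, F) : LCar A)
      = F.sum (fun m w => ((0, 0, Finsupp.single m w) : LCar A)) := by
    have := Finsupp.sum_single F
    calc ((0, 0, F) : LCar A)
        = ((LinearMap.inr k A.carrier (A.carrier × (ℕ →₀ TensorAlgebra k A.carrier))).comp
            (LinearMap.inr k A.carrier (ℕ →₀ TensorAlgebra k A.carrier))) F := rfl
      _ = _ := by
          conv_lhs => rw [← this]
          rw [map_finsuppSum]
          rfl
  rw [hF]
  exact Submodule.sum_mem p (fun m _ => hD _ m)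

end LConstr

/-- every countably generated L-algebra over a field k embeds into
an L-algebra generated by two elements. -/
theorem embed_two_generated (k : Type) [Field k] (A : LAlg k)
    (hA : ∃ s : Set A.carrier, s.Countable ∧ LGen A s) :
    ∃ (B : LAlg k) (f : A.carrier →ₗ[k] B.carrier),
      Function.Injective f ∧ IsLHom A B f ∧
      ∃ b1 b2 : B.carrier, LGen B {b1, b2} := by
  obtain ⟨s, hc, hgen⟩ := hA
  obtain ⟨g, hg⟩ : ∃ g : ℕ → A.carrier, s ⊆ Set.range g := by
    rcases s.eq_empty_or_nonempty with h | h
    · exact ⟨fun _ => 0, by simp [h]⟩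
    · obtain ⟨g, hgs⟩ := hc.exists_eq_range h
      exact ⟨g, hgs.subset⟩
  refine ⟨BAlg A g,
    LinearMap.inl k A.carrier (A.carrier × (ℕ →₀ TensorAlgebra k A.carrier)), ?_, ?_, ?_⟩
  · exact LinearMap.inl_injective
  · constructor
    · intro x y
      exact (comp_pre A g x y).symm
    · intro x y
      exact (comp_suc A x y).symm
  · exact ⟨eps A 0, eps A 1, BAlg_gen A g s hg hgen⟩
end

section
/- Every L-algebra over a field k embeds into a simple L-algebra, where an L-algebra is simple if it has no ideals other than 0 and itself (equivalently, every two nonzero elements generate the same ideal, the whole algebra). -/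
variable {k : Type} [Field k]

noncomputable def LExt (A : LAlg k) : LAlg k where
  carrier := A.carrier × Module.Dual k A.carrier × k
  pre := LinearMap.mk₂ k
    (fun x y => (A.pre x.1 y.1 + y.2.2 • x.1, y.2.2 • x.2.1, x.2.1 y.1 + x.2.2 * y.2.2))
    (by intro x x' y; ext <;> simp [add_smul, mul_add, add_mul] <;> first | abel1 | ring1 | tauto)
    (by intro c x y; ext <;> simp [smul_smul, mul_add, add_mul, mul_comm, mul_left_comm] <;> first | abel1 | ring1 | tauto)
    (by intro x y y'; ext <;> simp [add_smul, mul_add, add_mul] <;> first | abel1 | ring1 | tauto)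
    (by intro c x y; ext <;> simp [smul_smul, mul_add, add_mul, mul_comm, mul_left_comm] <;> first | abel1 | ring1 | tauto)
  suc := LinearMap.mk₂ k
    (fun x y => (A.suc x.1 y.1 + x.2.2 • y.1, x.2.2 • y.2.1, x.2.2 * y.2.2))
    (by intro x x' y; ext <;> simp [add_smul, mul_add, add_mul] <;> first | abel1 | ring1 | tauto)
    (by intro c x y; ext <;> simp [smul_smul, mul_add, add_mul, mul_comm, mul_left_comm] <;> first | abel1 | ring1 | tauto)
    (by intro x y y'; ext <;> simp [add_smul, mul_add, add_mul] <;> first | abel1 | ring1 | tauto)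
    (by intro c x y; ext <;> simp [smul_smul, mul_add, add_mul, mul_comm, mul_left_comm] <;> first | abel1 | ring1 | tauto)
  entangle := by
    intro x y z
    ext
    · simp [A.entangle x.1 y.1 z.1, smul_smul, mul_comm]
      module
    · simp [smul_smul, mul_comm]
    · simp [mul_add, add_mul, mul_comm, mul_left_comm]

lemma LExt_pre (A : LAlg k) (a b : A.carrier) (f g : Module.Dual k A.carrier) (s t : k) :
    (LExt A).pre (a, f, s) (b, g, t) = (A.pre a b + t • a, t • f, f b + s * t) := rfl

lemma LExt_suc (A : LAlg k) (a b : A.carrier) (f g : Module.Dual k A.carrier) (s t : k) :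
    (LExt A).suc (a, f, s) (b, g, t) = (A.suc a b + s • b, s • g, s * t) := rfl

lemma LExt_smul (A : LAlg k) (c : k) (a : A.carrier) (f : Module.Dual k A.carrier) (s : k) :
    c • ((a, f, s) : (LExt A).carrier) = (c • a, c • f, c * s) := rfl

/-- every L-algebra over a field k embeds into a simple L-algebra. -/
theorem embed_simple (k : Type) [Field k] (A : LAlg k) :
    ∃ (B : LAlg k) (f : A.carrier →ₗ[k] B.carrier),
      Function.Injective f ∧ IsLHom A B f ∧ LSimple B := by
  classical
  refine ⟨LExt A, LinearMap.inl k A.carrier (Module.Dual k A.carrier × k),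
    LinearMap.inl_injective, ⟨?_, ?_⟩, ?_⟩
  · intro x y
    show ((A.pre x y, 0, 0) : (LExt A).carrier) = (LExt A).pre (x, 0, 0) (y, 0, 0)
    rw [LExt_pre]
    simp
  · intro x y
    show ((A.suc x y, 0, 0) : (LExt A).carrier) = (LExt A).suc (x, 0, 0) (y, 0, 0)
    rw [LExt_suc]
    simp
  · intro I hI
    by_cases hbot : I = ⊥
    · exact Or.inl hbot
    right
    obtain ⟨x, hxI, hx⟩ := Submodule.exists_mem_ne_zero_of_ne_bot hbot
    obtain ⟨a, f, s⟩ : A.carrier × Module.Dual k A.carrier × k := x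
    set e : (LExt A).carrier := ((0 : A.carrier), (0 : Module.Dual k A.carrier), (1 : k))
      with he
    -- from any element of I with nonzero last coordinate, get e ∈ I
    have key : ∀ (b : A.carrier) (g : Module.Dual k A.carrier) (t : k),
        ((b, g, t) : (LExt A).carrier) ∈ I → t ≠ 0 → e ∈ I := by
      intro b g t hz ht
      have h1 : (LExt A).suc (b, g, t) e ∈ I := (hI _ hz e).2.2.1
      rw [he, LExt_suc] at h1
      simp only [map_zero, smul_zero, add_zero, mul_one] at h1
      have h2 := I.smul_mem t⁻¹ h1
      replace h2 : ((t⁻¹ • (0 : A.carrier), t⁻¹ • (0 : Module.Dual k A.carrier), t⁻¹ * t) : (LExt A).carrier) ∈ I := h2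
      simp [inv_mul_cancel₀ ht] at h2
      exact h2
    have heI : e ∈ I := by
      by_cases hs : s ≠ 0
      · exact key a f s hxI hs
      push_neg at hs
      subst hs
      by_cases hf : f ≠ 0
      · obtain ⟨b, hb⟩ := DFunLike.ne_iff.mp hf
        have h1 : (LExt A).pre (a, f, 0) ((b : A.carrier), 0, (0 : k)) ∈ I :=
          (hI _ hxI _).1
        rw [LExt_pre] at h1
        simp only [zero_smul, add_zero, mul_zero, zero_mul] at h1
        exact key _ _ _ h1 (by simpa using hb)
      push_neg at hf
      subst hf
      have ha : a ≠ 0 := by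
        intro h
        exact hx (by simp [h]; rfl)
      obtain ⟨g, hg⟩ : ∃ g : Module.Dual k A.carrier, g a ≠ 0 := by
        by_contra hcon
        push_neg at hcon
        exact ha ((Module.forall_dual_apply_eq_zero_iff k a).mp hcon)
      have h2 : (LExt A).pre ((0 : A.carrier), g, (0 : k)) (a, 0, 0) ∈ I :=
        (hI _ hxI _).2.1
      rw [LExt_pre] at h2
      simp only [map_zero, zero_smul, smul_zero, add_zero, mul_zero, zero_mul] at h2
      exact key _ _ _ h2 hg
    rw [Submodule.eq_top_iff']
    intro y
    obtain ⟨b, g, t⟩ : A.carrier × Module.Dual k A.carrier × k := y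
    have h1 : (LExt A).suc e (b, g, t) ∈ I := (hI e heI _).2.2.1
    rw [he, LExt_suc] at h1
    simpa using h1
end
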